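/- Let V be a 2n-dimensional real symplectic vector space with symplectic form ω, and let L: Λ^h V* → Λ^{h+2} V* be the Lefschetz operator α ↦ ω ∧ α. Then for 0 ≤ h ≤ n, the map L^{n-h}: Λ^h V* → Λ^{2n-h} V* is a linear isomorphism. -/

import Mathlib

/-!
Let `e₁, …, eₙ, f₁, …, fₙ` be the basis in which `ω = ∑ eᵢ ∧ fᵢ`, and let
`Λ = ∑ ι(fᵢ*) ι(eᵢ*)` be built from contractions with the dual basis. Since contraction is an odd
derivation, `∑ₖ bₖ ∧ ι(bₖ*)` multiplies a `k`-form by `k` (Euler), and `[Λ, L] = n - k` on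
`Λ^k V*`; iterating, `Λ L^(j+1) = L^(j+1) Λ + (j+1)(n-k-j) L^j` there. If `L^(j+1) x = 0` with
`x ∈ Λ^h V*` and `j + 1 + h ≤ n`, the coefficient is nonzero, so induction on `j` gives
`L Λx = -(j+1)(n-h-j) x`, whence `L^(j+2) Λx = 0`, and induction on `h` gives `Λx = 0`, hence
`x = 0`. So `L^(n-h)` is injective on `Λ^h V*`, and it is bijective onto `Λ^(2n-h) V*` because
both spaces have dimension `C(2n, h)`.
-/

set_option synthInstance.maxHeartbeats 1000000
set_option maxHeartbeats 1000000

open ExteriorAlgebra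

/-- The space of `h`-covectors `Λ^h V*`, realized as the degree-`h` piece of the
exterior algebra of the dual space. -/
noncomputable def gradePiece (V : Type) [AddCommGroup V] [Module ℝ V] (h : ℕ) :
    Submodule ℝ (ExteriorAlgebra ℝ (Module.Dual ℝ V)) :=
  (LinearMap.range (ι ℝ : Module.Dual ℝ V →ₗ[ℝ] ExteriorAlgebra ℝ (Module.Dual ℝ V))) ^ h

open CliffordAlgebra (contractLeft contractLeft_ι_mul contractLeft_algebraMap)

theorem LinearMap.bijOn_of_injOn_of_finrank_eq {K V W : Type*} [Field K] [AddCommGroup V]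
    [Module K V] [AddCommGroup W] [Module K W] (f : V →ₗ[K] W) {p : Submodule K V}
    {q : Submodule K W} [FiniteDimensional K p] [FiniteDimensional K q] (hmaps : Set.MapsTo f p q)
    (hinj : Set.InjOn f p) (hrank : Module.finrank K p = Module.finrank K q) :
    Set.BijOn f p q := by
  refine ⟨hmaps, hinj, fun y hy => ?_⟩
  have hsurj : Function.Surjective (f.restrict hmaps) :=
    (LinearMap.injective_iff_surjective_of_finrank_eq_finrank hrank).mp
      fun x y hxy => Subtype.ext (hinj x.2 y.2 (congrArg Subtype.val hxy))
  obtain ⟨x, hx⟩ := hsurj ⟨y, hy⟩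
  exact ⟨x, x.2, congrArg Subtype.val hx⟩

namespace ExteriorAlgebra

variable {R M : Type*} [CommRing R] [AddCommGroup M] [Module R M]

theorem ι_mul_mem_exteriorPower_succ (v : M) {k : ℕ} {y : ExteriorAlgebra R M}
    (hy : y ∈ ⋀[R]^k M) : ι R v * y ∈ ⋀[R]^(k + 1) M := by
  rw [exteriorPower, pow_succ']
  exact Submodule.mul_mem_mul ⟨v, rfl⟩ hy

theorem contractLeft_eq_zero_of_mem_exteriorPower_zero (d : Module.Dual R M)
    {x : ExteriorAlgebra R M} (hx : x ∈ ⋀[R]^0 M) : contractLeft d x = 0 := by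
  rw [exteriorPower, pow_zero] at hx
  obtain ⟨r, rfl⟩ := Submodule.mem_one.mp hx
  exact contractLeft_algebraMap _ d r

theorem contractLeft_mem_exteriorPower (d : Module.Dual R M) :
    ∀ {k : ℕ} {x : ExteriorAlgebra R M}, x ∈ ⋀[R]^(k + 1) M → contractLeft d x ∈ ⋀[R]^k M
  | k, x, hx => by
    rw [exteriorPower, pow_succ'] at hx
    refine Submodule.mul_induction_on hx (fun m hm y hy => ?_)
      (fun y z hy hz => by rw [map_add]; exact add_mem hy hz)
    obtain ⟨v, rfl⟩ := hm
    rw [contractLeft_ι_mul]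
    refine sub_mem (Submodule.smul_mem _ _ hy) ?_
    match k, hy with
    | 0, hy => simp [contractLeft_eq_zero_of_mem_exteriorPower_zero d hy]
    | k + 1, hy => exact ι_mul_mem_exteriorPower_succ v (contractLeft_mem_exteriorPower d hy)

theorem sum_ι_mul_contractLeft_coord_eq_nsmul {κ : Type*} [Fintype κ] (b : Module.Basis κ R M)
    {k : ℕ} {x : ExteriorAlgebra R M} (hx : x ∈ ⋀[R]^k M) :
    ∑ i, ι R (b i) * contractLeft (b.coord i) x = k • x := by
  induction hx using Submodule.pow_induction_on_left' with
  | algebraMap r => simp [contractLeft_algebraMap]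
  | add x y k _ _ hx hy => simp only [map_add, mul_add, Finset.sum_add_distrib, hx, hy, smul_add]
  | mem_mul m hm k x _ hx =>
    obtain ⟨v, rfl⟩ := hm
    have hv : ∑ i, b.coord i v • ι R (b i) = ι R v := by
      simp_rw [Module.Basis.coord_apply, ← map_smul, ← map_sum, b.sum_repr]
    have hswap : ∀ i, ι R (b i) * (ι R v * contractLeft (b.coord i) x) =
        -(ι R v * (ι R (b i) * contractLeft (b.coord i) x)) := fun i => by
      rw [← mul_assoc, ← mul_assoc, ← neg_mul, eq_neg_of_add_eq_zero_left (ι_add_mul_swap _ _)]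
    simp_rw [contractLeft_ι_mul, mul_sub, mul_smul_comm, hswap, sub_neg_eq_add,
      Finset.sum_add_distrib, ← Finset.mul_sum, ← smul_mul_assoc, ← Finset.sum_mul, hv, hx]
    rw [mul_smul_comm, succ_nsmul, add_comm, add_mul, smul_mul_assoc]

theorem contractLeft_ι_mul_ι_mul (d : Module.Dual R M) (u v : M) (x : ExteriorAlgebra R M) :
    contractLeft d (ι R u * ι R v * x) =
      ι R u * ι R v * contractLeft d x + (d u • ι R v - d v • ι R u) * x := by
  rw [mul_assoc, contractLeft_ι_mul, contractLeft_ι_mul]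
  simp only [mul_sub, mul_smul_comm, sub_mul, smul_mul_assoc, mul_assoc]
  abel

end ExteriorAlgebra

section Ring

variable {R M : Type*} [CommRing R] [AddCommGroup M] [Module R M] {n : ℕ}
  (b : Module.Basis (Fin (n + n)) R M)

noncomputable def symplecticForm : ExteriorAlgebra R M :=
  ∑ i : Fin n, ι R (b (Fin.castAdd n i)) * ι R (b (Fin.natAdd n i))

noncomputable def dualLefschetz : ExteriorAlgebra R M →ₗ[R] ExteriorAlgebra R M :=
  ∑ i : Fin n, contractLeft (b.coord (Fin.natAdd n i)) ∘ₗ contractLeft (b.coord (Fin.castAdd n i))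

theorem dualLefschetz_apply (x : ExteriorAlgebra R M) :
    dualLefschetz b x = ∑ i : Fin n,
      contractLeft (b.coord (Fin.natAdd n i)) (contractLeft (b.coord (Fin.castAdd n i)) x) := by
  simp [dualLefschetz]

theorem symplecticForm_mem : symplecticForm b ∈ ⋀[R]^2 M :=
  Submodule.sum_mem _ fun i _ => by
    simpa using ι_mul_mem_exteriorPower_succ (b (Fin.castAdd n i))
      (ι_mul_mem_exteriorPower_succ (b (Fin.natAdd n i)) (k := 0) (Submodule.one_le.mp le_rfl))

theorem symplecticForm_pow_mul_mem (j : ℕ) {k : ℕ} {x : ExteriorAlgebra R M}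
    (hx : x ∈ ⋀[R]^k M) : symplecticForm b ^ j * x ∈ ⋀[R]^(2 * j + k) M := by
  simpa [mul_comm] using SetLike.mul_mem_graded (SetLike.pow_mem_graded j (symplecticForm_mem b)) hx

theorem contractLeft_symplecticForm_mul (d : Module.Dual R M) (x : ExteriorAlgebra R M) :
    contractLeft d (symplecticForm b * x) = symplecticForm b * contractLeft d x +
      (∑ i : Fin n, (d (b (Fin.castAdd n i)) • ι R (b (Fin.natAdd n i)) -
        d (b (Fin.natAdd n i)) • ι R (b (Fin.castAdd n i)))) * x := by
  simp only [symplecticForm, Finset.sum_mul, map_sum, contractLeft_ι_mul_ι_mul,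
    Finset.sum_add_distrib]

theorem Module.Basis.coord_castAdd_castAdd (i j : Fin n) :
    b.coord (Fin.castAdd n i) (b (Fin.castAdd n j)) = if j = i then 1 else 0 := by
  rw [coord_apply, repr_self_apply]
  simp

theorem Module.Basis.coord_natAdd_natAdd (i j : Fin n) :
    b.coord (Fin.natAdd n i) (b (Fin.natAdd n j)) = if j = i then 1 else 0 := by
  rw [coord_apply, repr_self_apply]
  simp

theorem Module.Basis.coord_castAdd_natAdd (i j : Fin n) :
    b.coord (Fin.castAdd n i) (b (Fin.natAdd n j)) = 0 := by
  rw [coord_apply, repr_self_apply, if_neg]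
  simp only [Fin.ext_iff, Fin.val_natAdd, Fin.val_castAdd]
  omega

theorem Module.Basis.coord_natAdd_castAdd (i j : Fin n) :
    b.coord (Fin.natAdd n i) (b (Fin.castAdd n j)) = 0 := by
  rw [coord_apply, repr_self_apply, if_neg]
  simp only [Fin.ext_iff, Fin.val_natAdd, Fin.val_castAdd]
  omega

theorem contractLeft_coord_castAdd_symplecticForm_mul (i : Fin n) (x : ExteriorAlgebra R M) :
    contractLeft (b.coord (Fin.castAdd n i)) (symplecticForm b * x) =
      symplecticForm b * contractLeft (b.coord (Fin.castAdd n i)) x +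
        ι R (b (Fin.natAdd n i)) * x := by
  simp only [contractLeft_symplecticForm_mul, b.coord_castAdd_castAdd, b.coord_castAdd_natAdd,
    ite_smul, one_smul, zero_smul, sub_zero, Finset.sum_ite_eq', Finset.mem_univ, if_true]

theorem contractLeft_coord_natAdd_symplecticForm_mul (i : Fin n) (x : ExteriorAlgebra R M) :
    contractLeft (b.coord (Fin.natAdd n i)) (symplecticForm b * x) =
      symplecticForm b * contractLeft (b.coord (Fin.natAdd n i)) x -
        ι R (b (Fin.castAdd n i)) * x := by
  simp only [contractLeft_symplecticForm_mul, b.coord_natAdd_natAdd, b.coord_natAdd_castAdd,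
    ite_smul, one_smul, zero_smul, zero_sub, Finset.sum_neg_distrib, Finset.sum_ite_eq',
    Finset.mem_univ, if_true, neg_mul, ← sub_eq_add_neg]

theorem dualLefschetz_symplecticForm_mul (x : ExteriorAlgebra R M) :
    dualLefschetz b (symplecticForm b * x) = symplecticForm b * dualLefschetz b x + n • x -
      ∑ k, ι R (b k) * contractLeft (b.coord k) x := by
  simp only [dualLefschetz_apply, contractLeft_coord_castAdd_symplecticForm_mul, map_add,
    contractLeft_coord_natAdd_symplecticForm_mul, contractLeft_ι_mul, Fin.sum_univ_add,
    Finset.mul_sum, b.coord_natAdd_natAdd, ↓reduceIte, one_smul, Finset.sum_add_distrib,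
    Finset.sum_sub_distrib, Finset.sum_const, Finset.card_univ, Fintype.card_fin]
  abel

theorem dualLefschetz_symplecticForm_mul_of_mem {k : ℕ} {x : ExteriorAlgebra R M}
    (hx : x ∈ ⋀[R]^k M) :
    dualLefschetz b (symplecticForm b * x) =
      symplecticForm b * dualLefschetz b x + ((n : R) - k) • x := by
  rw [dualLefschetz_symplecticForm_mul, sum_ι_mul_contractLeft_coord_eq_nsmul b hx, sub_smul,
    Nat.cast_smul_eq_nsmul, Nat.cast_smul_eq_nsmul, add_sub_assoc]

theorem dualLefschetz_symplecticForm_pow_succ_mul {k : ℕ} {x : ExteriorAlgebra R M}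
    (hx : x ∈ ⋀[R]^k M) (j : ℕ) :
    dualLefschetz b (symplecticForm b ^ (j + 1) * x) =
      symplecticForm b ^ (j + 1) * dualLefschetz b x +
        (((j : R) + 1) * (n - k - j)) • (symplecticForm b ^ j * x) := by
  induction j with
  | zero => simpa using dualLefschetz_symplecticForm_mul_of_mem b hx
  | succ j ih =>
    rw [pow_succ', mul_assoc,
      dualLefschetz_symplecticForm_mul_of_mem b (symplecticForm_pow_mul_mem b (j + 1) hx), ih,
      mul_add, mul_smul_comm, ← mul_assoc, ← pow_succ', ← mul_assoc, ← pow_succ', add_assoc,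
      ← add_smul]
    congr 2
    push_cast
    ring

theorem dualLefschetz_mem_exteriorPower {k : ℕ} {x : ExteriorAlgebra R M}
    (hx : x ∈ ⋀[R]^(k + 2) M) : dualLefschetz b x ∈ ⋀[R]^k M := by
  rw [dualLefschetz_apply]
  exact Submodule.sum_mem _ fun _ _ =>
    contractLeft_mem_exteriorPower _ (contractLeft_mem_exteriorPower _ hx)

theorem dualLefschetz_eq_zero_of_mem_exteriorPower {k : ℕ} {x : ExteriorAlgebra R M}
    (hx : x ∈ ⋀[R]^k M) (hk : k < 2) : dualLefschetz b x = 0 := by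
  rw [dualLefschetz_apply]
  refine Finset.sum_eq_zero fun _ _ => ?_
  interval_cases k
  · simp [contractLeft_eq_zero_of_mem_exteriorPower_zero _ hx]
  · exact contractLeft_eq_zero_of_mem_exteriorPower_zero _ (contractLeft_mem_exteriorPower _ hx)

end Ring

section Field

variable {K M : Type*} [Field K] [CharZero K] [AddCommGroup M] [Module K M] {n : ℕ}
  (b : Module.Basis (Fin (n + n)) K M)

theorem eq_zero_of_symplecticForm_pow_mul_eq_zero {h j : ℕ} (hjh : j + h ≤ n)
    {x : ExteriorAlgebra K M} (hx : x ∈ ⋀[K]^h M) (hωx : symplecticForm b ^ j * x = 0) :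
    x = 0 := by
  induction h using Nat.strong_induction_on generalizing j x with | _ h ihh =>
  induction j generalizing x with
  | zero => simpa using hωx
  | succ j ihj =>
    set c : K := ((j : K) + 1) * (n - h - j) with hc_def
    have hc : c ≠ 0 := by
      have : (n : K) - h - j = ((n - h - j : ℕ) : K) := by
        rw [Nat.cast_sub (by omega), Nat.cast_sub (by omega)]
      rw [hc_def, this]
      exact mul_ne_zero (Nat.cast_add_one_ne_zero j) (Nat.cast_ne_zero.mpr (by omega))
    have hcomm : symplecticForm b ^ j * (symplecticForm b * dualLefschetz b x + c • x) = 0 := by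
      rw [mul_add, ← mul_assoc, ← pow_succ, mul_smul_comm,
        ← dualLefschetz_symplecticForm_pow_succ_mul b hx, hωx, map_zero]
    have hΛ : dualLefschetz b x = 0 := by
      rcases Nat.lt_or_ge h 2 with hlt | hge
      · exact dualLefschetz_eq_zero_of_mem_exteriorPower b hx hlt
      obtain ⟨k, rfl⟩ := Nat.exists_eq_add_of_le' hge
      have hmem : symplecticForm b * dualLefschetz b x + c • x ∈ ⋀[K]^(k + 2) M := by
        refine add_mem ?_ (Submodule.smul_mem _ _ hx)
        simpa [add_comm] using
          symplecticForm_pow_mul_mem b 1 (dualLefschetz_mem_exteriorPower b hx)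
      have hω : symplecticForm b * dualLefschetz b x = -(c • x) :=
        eq_neg_of_add_eq_zero_left (ihj (by omega) hmem hcomm)
      refine ihh k (by omega) (j := j + 2) (by omega) (dualLefschetz_mem_exteriorPower b hx) ?_
      rw [pow_succ, mul_assoc, hω, mul_neg, mul_smul_comm, hωx, smul_zero, neg_zero]
    rw [hΛ, mul_zero, zero_add, mul_smul_comm, smul_eq_zero] at hcomm
    exact ihj (by omega) hx (hcomm.resolve_left hc)

end Field

theorem lefschetz_power_bijective_general (n : ℕ) (V : Type) [AddCommGroup V] [Module ℝ V]
    (b : Module.Basis (Fin (n + n)) ℝ (Module.Dual ℝ V))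
    (ω : ExteriorAlgebra ℝ (Module.Dual ℝ V))
    (hω : ω = ∑ i : Fin n, ι ℝ (b (Fin.castAdd n i)) * ι ℝ (b (Fin.natAdd n i)))
    (h : ℕ) (hh : h ≤ n) :
    Set.BijOn (fun x => ω ^ (n - h) * x)
      (gradePiece V h : Set (ExteriorAlgebra ℝ (Module.Dual ℝ V)))
      (gradePiece V (2 * n - h) : Set (ExteriorAlgebra ℝ (Module.Dual ℝ V))) := by
  obtain rfl : ω = symplecticForm b := hω
  have : Module.Finite ℝ (Module.Dual ℝ V) := .of_basis b
  refine (LinearMap.mulLeft ℝ (symplecticForm b ^ (n - h))).bijOn_of_injOn_of_finrank_eq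
    (p := ⋀[ℝ]^h _) (q := ⋀[ℝ]^(2 * n - h) _) (fun x hx => ?_) (fun x hx y hy hxy => ?_) ?_
  · simpa [show 2 * (n - h) + h = 2 * n - h by omega] using symplecticForm_pow_mul_mem b (n - h) hx
  · refine sub_eq_zero.mp
      (eq_zero_of_symplecticForm_pow_mul_eq_zero b (j := n - h) (by omega) (sub_mem hx hy) ?_)
    simpa [mul_sub, sub_eq_zero] using hxy
  · rw [exteriorPower.finrank_eq, exteriorPower.finrank_eq, Module.finrank_eq_card_basis b,
      Fintype.card_fin, ← Nat.choose_symm (by omega)]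
    congr 1
    omega

/-- **Hard Lefschetz isomorphism.** If `V` is a `2n`-dimensional real symplectic vector
space with symplectic form `ω ∈ Λ² V*` (written in a symplectic basis), and `L α = ω ∧ α`
is the Lefschetz operator, then for `0 ≤ h ≤ n` the map
`L^(n-h) : Λ^h V* → Λ^(2n-h) V*` is a linear isomorphism. -/
theorem lefschetz_power_bijective (n : ℕ) (V : Type) [AddCommGroup V] [Module ℝ V]
    [FiniteDimensional ℝ V] (hdim : Module.finrank ℝ V = 2 * n)
    (b : Module.Basis (Fin (n + n)) ℝ (Module.Dual ℝ V))
    (ω : ExteriorAlgebra ℝ (Module.Dual ℝ V))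
    (hω : ω = ∑ i : Fin n, ι ℝ (b (Fin.castAdd n i)) * ι ℝ (b (Fin.natAdd n i)))
    (h : ℕ) (hh : h ≤ n) :
    Set.BijOn (fun x => ω ^ (n - h) * x)
      (gradePiece V h : Set (ExteriorAlgebra ℝ (Module.Dual ℝ V)))
      (gradePiece V (2 * n - h) : Set (ExteriorAlgebra ℝ (Module.Dual ℝ V))) :=
  lefschetz_power_bijective_general n V b ω hω h hh
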